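/- (Lemma 1, two hidden layers.) Let ‖·‖ be a norm on ℝⁿ with dual norm ‖·‖_*. Let A₁ be a p₁×n real matrix, b₁ ∈ ℝ^{p₁}, A₂ a p₂×p₁ real matrix, b₂ ∈ ℝ^{p₂}, c ∈ ℝ^{p₂}, and define F(x) = ⟨c, ReLU(A₂ · ReLU(A₁ x + b₁) + b₂)⟩ where ReLU is applied coordinatewise. Let Ω ⊆ ℝⁿ be convex and L ∈ ℝ be such that for every x ∈ Ω, setting z₁ = A₁ x + b₁ and z₂ = A₂ · ReLU(z₁) + b₂, for every u₁ ∈ ℝ^{p₁} with (u₁)ⱼ ∈ G((z₁)ⱼ) for all j and every u₂ ∈ ℝ^{p₂} with (u₂)ₖ ∈ G((z₂)ₖ) for all k, one has ‖A₁ᵀ diag(u₁) A₂ᵀ diag(u₂) c‖_* ≤ L. Then for all x, y ∈ Ω, |F(y) - F(x)| ≤ L · ‖y - x‖. -/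

import Mathlib

open Matrix

/-- The ReLU function. -/
noncomputable def ReLU (x : ℝ) : ℝ := max 0 x

/-- The generalized derivative of ReLU: `G(x) = {1}` for `x > 0`, `{0}` for `x < 0`,
and `{0, 1}` for `x = 0`. -/
noncomputable def G (x : ℝ) : Set ℝ :=
  if 0 < x then {1} else if x < 0 then {0} else {0, 1}

/-- The dual norm of a norm `N` on `ℝⁿ`:
`‖v‖_* = sup { |⟨t, v⟩| : N t ≤ 1 }`. -/
noncomputable def dualNorm (n : ℕ) (N : (Fin n → ℝ) → ℝ) (v : Fin n → ℝ) : ℝ :=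
  sSup {r : ℝ | ∃ t : Fin n → ℝ, N t ≤ 1 ∧ r = |∑ i, t i * v i|}

/-! Along the segment `τ ↦ x + τ • (y - x)` the network has a right derivative at every
`τ ∈ [0, 1)`. Since ReLU is 1-Lipschitz, `ReLU ∘ h` has the same right derivative as ReLU along
the tangent line of `h`, namely `u * h'` for some `u ∈ G (h τ)`. Applied layer by layer, this makes
the right derivative equal to `⟨y - x, A₁ᵀ diag(u₁) A₂ᵀ diag(u₂) c⟩` for admissible `u₁, u₂`,
which is at most `L * N (y - x)` in absolute value; the mean value inequality for right
derivatives concludes. The supremum defining the dual norm is finite (so not the junk `sSup`)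
because, in finite dimension, the unit ball of `N` is compact. -/

open Set Topology

section FiniteDimensionalSeminorm

variable {E : Type*} [NormedAddCommGroup E] [NormedSpace ℝ E] [FiniteDimensional ℝ E]

theorem Seminorm.continuous_of_finiteDimensional (p : Seminorm ℝ E) : Continuous p :=
  continuousOn_univ.mp (p.convexOn.continuousOn isOpen_univ)

theorem Seminorm.exists_pos_mul_norm_le {p : Seminorm ℝ E} (hp : ∀ x, p x = 0 → x = 0) :
    ∃ m > 0, ∀ x, m * ‖x‖ ≤ p x := by
  cases subsingleton_or_nontrivial E
  · exact ⟨1, one_pos, fun x => by simp [Subsingleton.elim x 0]⟩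
  obtain ⟨x₀, hx₀, hmin⟩ := (isCompact_sphere (0 : E) 1).exists_isMinOn
    (NormedSpace.sphere_nonempty.2 zero_le_one) p.continuous_of_finiteDimensional.continuousOn
  have hx₀ : ‖x₀‖ = 1 := by simpa using hx₀
  have hpos : 0 < p x₀ :=
    (apply_nonneg p x₀).lt_of_ne fun h => by simp [hp x₀ h.symm] at hx₀
  refine ⟨p x₀, hpos, fun x => ?_⟩
  rcases eq_or_ne x 0 with rfl | hx
  · simp
  have hx' : 0 < ‖x‖ := norm_pos_iff.2 hx
  have hmem : ‖x‖⁻¹ • x ∈ Metric.sphere (0 : E) 1 := by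
    simp [norm_smul, hx'.ne']
  have := hmin hmem
  rwa [mem_ofPred_eq, map_smul_eq_mul, norm_inv, norm_norm, inv_mul_eq_div,
    le_div_iff₀ hx'] at this

theorem Seminorm.isCompact_setOf_le {p : Seminorm ℝ E} (hp : ∀ x, p x = 0 → x = 0) (r : ℝ) :
    IsCompact {x | p x ≤ r} := by
  obtain ⟨m, hm, hle⟩ := p.exists_pos_mul_norm_le hp
  refine Metric.isCompact_of_isClosed_isBounded
    (isClosed_le p.continuous_of_finiteDimensional continuous_const) ?_
  refine (Metric.isBounded_closedBall (x := (0 : E)) (r := r / m)).subset fun x hx => ?_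
  rw [mem_closedBall_zero_iff, le_div_iff₀ hm, mul_comm]
  exact (hle x).trans hx

end FiniteDimensionalSeminorm

theorem abs_dotProduct_le_dualNorm_mul {n : ℕ} {p : Seminorm ℝ (Fin n → ℝ)}
    (hp : ∀ t, p t = 0 → t = 0) (v w : Fin n → ℝ) :
    |w ⬝ᵥ v| ≤ dualNorm n p v * p w := by
  rcases eq_or_ne w 0 with rfl | hw
  · simp
  have hpw : 0 < p w := (apply_nonneg p w).lt_of_ne fun h => hw (hp w h.symm)
  have hbdd : BddAbove {r : ℝ | ∃ t : Fin n → ℝ, p t ≤ 1 ∧ r = |t ⬝ᵥ v|} := by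
    obtain ⟨C, hC⟩ := (p.isCompact_setOf_le hp 1).bddAbove_image
      (f := fun t => |t ⬝ᵥ v|) (by fun_prop)
    exact ⟨C, by rintro _ ⟨t, ht, rfl⟩; exact hC ⟨t, ht, rfl⟩⟩
  have hunit : p ((p w)⁻¹ • w) ≤ 1 := by
    rw [map_smul_eq_mul, norm_inv, Real.norm_of_nonneg hpw.le, inv_mul_cancel₀ hpw.ne']
  have := le_csSup hbdd ⟨_, hunit, rfl⟩
  rw [smul_dotProduct, smul_eq_mul, abs_mul, abs_inv, abs_of_pos hpw, inv_mul_le_iff₀ hpw] at this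
  exact this.trans_eq (mul_comm _ _)

theorem HasDerivWithinAt.comp_of_lipschitzWith_of_affine {𝕜 E F : Type*}
    [NontriviallyNormedField 𝕜] [NormedAddCommGroup E] [NormedSpace 𝕜 E]
    [NormedAddCommGroup F] [NormedSpace 𝕜 F] {φ : E → F} {K : NNReal} (hφ : LipschitzWith K φ)
    {h : 𝕜 → E} {d : E} {e : F} {s : Set 𝕜} {t : 𝕜} (hh : HasDerivWithinAt h d s t)
    (hφ' : HasDerivWithinAt (fun τ => φ (h t + (τ - t) • d)) e s t) :
    HasDerivWithinAt (fun τ => φ (h τ)) e s t := by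
  rw [hasDerivWithinAt_iff_isLittleO] at hh hφ' ⊢
  simp only [sub_self, zero_smul, add_zero] at hφ'
  have hlip : (fun τ => φ (h τ) - φ (h t + (τ - t) • d)) =O[𝓝[s] t]
      fun τ => h τ - h t - (τ - t) • d :=
    .of_bound K <| .of_forall fun τ => by
      simpa [← dist_eq_norm, sub_sub, dist_comm] using hφ.dist_le_mul (h τ) (h t + (τ - t) • d)
  refine ((hlip.trans_isLittleO hh).add hφ').congr_left fun τ => ?_
  abel

theorem lipschitzWith_one_ReLU : LipschitzWith 1 ReLU :=
  LipschitzWith.id.const_max 0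

theorem exists_mem_G_hasDerivWithinAt_ReLU_affine (z d t : ℝ) :
    ∃ u ∈ G z, HasDerivWithinAt (fun τ => ReLU (z + (τ - t) • d)) (u * d) (Ici t) t := by
  have hline : HasDerivAt (fun τ => z + (τ - t) • d) d t := by
    simpa using ((hasDerivAt_id t).sub_const t).smul_const d |>.const_add z
  have hzero : HasDerivWithinAt (fun _ => (0 : ℝ)) (0 * d) (Ici t) t := by
    simpa using hasDerivWithinAt_const t (Ici t) (0 : ℝ)
  have hid : HasDerivWithinAt (fun τ => z + (τ - t) • d) (1 * d) (Ici t) t := by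
    simpa using hline.hasDerivWithinAt
  rcases lt_trichotomy z 0 with hz | rfl | hz
  · refine ⟨0, by simp [G, hz, hz.not_gt], hzero.congr_of_eventuallyEq ?_ (by simp [ReLU, hz.le])⟩
    have hneg : ∀ᶠ τ in 𝓝 t, z + (τ - t) • d < 0 :=
      hline.continuousAt.eventually (gt_mem_nhds (by simpa using hz))
    filter_upwards [nhdsWithin_le_nhds hneg] with τ hτ using max_eq_left hτ.le
  · rcases le_or_gt 0 d with hd | hd
    · refine ⟨1, by simp [G], hid.congr (fun τ (hτ : t ≤ τ) => ?_) (by simp [ReLU])⟩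
      simp [ReLU, mul_nonneg (sub_nonneg.2 hτ) hd]
    · refine ⟨0, by simp [G], hzero.congr (fun τ (hτ : t ≤ τ) => ?_) (by simp [ReLU])⟩
      simp [ReLU, mul_nonpos_of_nonneg_of_nonpos (sub_nonneg.2 hτ) hd.le]
  · refine ⟨1, by simp [G, hz], hid.congr_of_eventuallyEq ?_ (by simp [ReLU, hz.le])⟩
    have hpos : ∀ᶠ τ in 𝓝 t, 0 < z + (τ - t) • d :=
      hline.continuousAt.eventually (lt_mem_nhds (by simpa using hz))
    filter_upwards [nhdsWithin_le_nhds hpos] with τ hτ using max_eq_right hτ.le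

theorem HasDerivWithinAt.exists_mem_G_hasDerivWithinAt_ReLU {h : ℝ → ℝ} {d t : ℝ}
    (hh : HasDerivWithinAt h d (Ici t) t) :
    ∃ u ∈ G (h t), HasDerivWithinAt (fun τ => ReLU (h τ)) (u * d) (Ici t) t := by
  obtain ⟨u, hu, hderiv⟩ := exists_mem_G_hasDerivWithinAt_ReLU_affine (h t) d t
  exact ⟨u, hu, hh.comp_of_lipschitzWith_of_affine lipschitzWith_one_ReLU hderiv⟩

@[fun_prop]
theorem continuous_ReLU : Continuous ReLU :=
  lipschitzWith_one_ReLU.continuous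

section Layers

variable {ι κ : Type*} [Fintype ι] [Fintype κ] {a : ℝ → ι → ℝ} {a' : ι → ℝ} {t : ℝ}

theorem HasDerivWithinAt.exists_ReLU_layer [DecidableEq κ] (A : Matrix κ ι ℝ) (b : κ → ℝ)
    (ha : HasDerivWithinAt a a' (Ici t) t) :
    ∃ u : κ → ℝ, (∀ k, u k ∈ G ((A *ᵥ a t + b) k)) ∧
      HasDerivWithinAt (fun τ k => ReLU ((A *ᵥ a τ + b) k)) (diagonal u *ᵥ (A *ᵥ a'))
        (Ici t) t := by
  have hpre : HasDerivWithinAt (fun τ => A *ᵥ a τ + b) (A *ᵥ a') (Ici t) t :=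
    (A.mulVecLin.toContinuousLinearMap.hasFDerivAt.comp_hasDerivWithinAt t ha).add_const b
  choose u hu hderiv using fun k =>
    (hasDerivWithinAt_pi.1 hpre k).exists_mem_G_hasDerivWithinAt_ReLU
  exact ⟨u, hu, hasDerivWithinAt_pi.2 fun k => by simpa [mulVec_diagonal] using hderiv k⟩

theorem HasDerivWithinAt.const_dotProduct (c : ι → ℝ) (ha : HasDerivWithinAt a a' (Ici t) t) :
    HasDerivWithinAt (fun τ => c ⬝ᵥ a τ) (c ⬝ᵥ a') (Ici t) t :=
  HasDerivWithinAt.fun_sum fun i _ => (hasDerivWithinAt_pi.1 ha i).const_mul (c i)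

end Layers


theorem exists_hasDerivWithinAt_two_layer {ι κ μ : Type*} [Fintype ι] [Fintype κ] [Fintype μ]
    [DecidableEq κ] [DecidableEq μ] (A₁ : Matrix κ ι ℝ) (b₁ : κ → ℝ) (A₂ : Matrix μ κ ℝ)
    (b₂ c : μ → ℝ) (x w : ι → ℝ) (t : ℝ) :
    ∃ (u₁ : κ → ℝ) (u₂ : μ → ℝ), (∀ j, u₁ j ∈ G ((A₁ *ᵥ (x + t • w) + b₁) j)) ∧
      (∀ k, u₂ k ∈ G ((A₂ *ᵥ (fun j => ReLU ((A₁ *ᵥ (x + t • w) + b₁) j)) + b₂) k)) ∧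
      HasDerivWithinAt
        (fun τ => c ⬝ᵥ fun k => ReLU ((A₂ *ᵥ (fun j => ReLU ((A₁ *ᵥ (x + τ • w) + b₁) j)) + b₂) k))
        (w ⬝ᵥ ((A₁ᵀ * diagonal u₁ * A₂ᵀ * diagonal u₂) *ᵥ c)) (Ici t) t := by
  have hline : HasDerivWithinAt (fun τ => x + τ • w) w (Ici t) t := by
    simpa using ((hasDerivAt_id t).smul_const w).const_add x |>.hasDerivWithinAt
  obtain ⟨u₁, hu₁, h₁⟩ := hline.exists_ReLU_layer A₁ b₁
  obtain ⟨u₂, hu₂, h₂⟩ := h₁.exists_ReLU_layer A₂ b₂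
  have hbackprop : c ⬝ᵥ (diagonal u₂ *ᵥ (A₂ *ᵥ (diagonal u₁ *ᵥ (A₁ *ᵥ w)))) =
      w ⬝ᵥ ((A₁ᵀ * diagonal u₁ * A₂ᵀ * diagonal u₂) *ᵥ c) := by
    rw [mulVec_mulVec, mulVec_mulVec, mulVec_mulVec, dotProduct_mulVec, dotProduct_comm,
      ← mulVec_transpose]
    simp [transpose_mul, Matrix.mul_assoc]
  exact ⟨u₁, u₂, hu₁, hu₂, hbackprop ▸ h₂.const_dotProduct c⟩

/-- Lemma 1, two hidden layers: if `‖A₁ᵀ diag(u₁) A₂ᵀ diag(u₂) c‖_* ≤ L` for every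
`x ∈ Ω` and every admissible pair `(u₁, u₂)` of generalized derivatives at the
pre-activations `z₁ = A₁x + b₁` and `z₂ = A₂ ReLU(z₁) + b₂`, then `L` is a
Lipschitz constant on the convex set `Ω` for
`F(x) = ⟨c, ReLU(A₂ ReLU(A₁x + b₁) + b₂)⟩` w.r.t. the norm `N`. -/
theorem two_layer_lipschitz_bound (n p₁ p₂ : ℕ)
    (N : (Fin n → ℝ) → ℝ)
    (Nadd : ∀ a b : Fin n → ℝ, N (a + b) ≤ N a + N b)
    (Nsmul : ∀ (r : ℝ) (a : Fin n → ℝ), N (r • a) = |r| * N a)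
    (Ndef : ∀ a : Fin n → ℝ, N a = 0 → a = 0)
    (A₁ : Matrix (Fin p₁) (Fin n) ℝ) (b₁ : Fin p₁ → ℝ)
    (A₂ : Matrix (Fin p₂) (Fin p₁) ℝ) (b₂ c : Fin p₂ → ℝ)
    (F : (Fin n → ℝ) → ℝ)
    (hF : ∀ x, F x = ∑ k, c k *
      ReLU ((A₂.mulVec (fun j => ReLU ((A₁.mulVec x + b₁) j)) + b₂) k))
    (Ω : Set (Fin n → ℝ)) (hΩ : Convex ℝ Ω) (L : ℝ)
    (hL : ∀ x ∈ Ω, ∀ u₁ : Fin p₁ → ℝ, ∀ u₂ : Fin p₂ → ℝ,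
      (∀ j, u₁ j ∈ G ((A₁.mulVec x + b₁) j)) →
      (∀ k, u₂ k ∈ G ((A₂.mulVec (fun j => ReLU ((A₁.mulVec x + b₁) j)) + b₂) k)) →
      dualNorm n N
        ((A₁ᵀ * Matrix.diagonal u₁ * A₂ᵀ * Matrix.diagonal u₂).mulVec c) ≤ L) :
    ∀ x ∈ Ω, ∀ y ∈ Ω, |F y - F x| ≤ L * N (y - x) := by
  intro x hx y hy
  let p : Seminorm ℝ (Fin n → ℝ) := .of N Nadd fun r a => by rw [Nsmul, Real.norm_eq_abs]
  have hderiv : ∀ t ∈ Ico (0 : ℝ) 1, ∃ g', HasDerivWithinAt (fun τ => F (x + τ • (y - x))) g'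
      (Ici t) t ∧ ‖g'‖ ≤ L * N (y - x) := by
    intro t ht
    obtain ⟨u₁, u₂, hu₁, hu₂, hg⟩ := exists_hasDerivWithinAt_two_layer A₁ b₁ A₂ b₂ c x (y - x) t
    refine ⟨_, hg.congr (fun τ _ => hF _) (hF _), ?_⟩
    calc _ ≤ dualNorm n N ((A₁ᵀ * diagonal u₁ * A₂ᵀ * diagonal u₂) *ᵥ c) * N (y - x) :=
          abs_dotProduct_le_dualNorm_mul (p := p) Ndef _ _
      _ ≤ L * N (y - x) := mul_le_mul_of_nonneg_right
          (hL _ (hΩ.add_smul_sub_mem hx hy (Ico_subset_Icc_self ht)) u₁ u₂ hu₁ hu₂)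
          (apply_nonneg p _)
  choose! D hD hDle using hderiv
  have hcont : Continuous fun τ : ℝ => F (x + τ • (y - x)) := by
    simp only [hF]
    fun_prop
  simpa using norm_image_sub_le_of_norm_deriv_right_le_segment hcont.continuousOn hD hDle 1
    (right_mem_Icc.2 zero_le_one)
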